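/- For transmission over BEC(p) with a uniform codeword from a code whose coordinate EXIT functions are all equal (e.g. a 1-transitive code), each EXIT function h_i(p) = H(X_i | Y_{∼i}) equals the average EXIT function h(p), and the area theorem gives ∫₀¹ h(p) dp = K/N, the rate of the code. -/

import Mathlib

/-!
Let `g(E)` be the dimension of the subcode of `C` supported on `E`. If `E` is the set of erased
positions, then given `Y` the codeword is uniform on a coset of that subcode, so
`H(X | Y) = 𝔼_p[g(E)]` for the `p`-random set `E`; and rank–nullity for evaluation at `i` gives
`h_i(p) = 𝔼_p[g(E ∪ {i}) - g(E ∖ {i})]`. By the Margulis–Russo formula the `h_i` therefore sum to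
the derivative of `p ↦ 𝔼_p[g(E)]`, which runs from `g(∅) = 0` to `g(univ) = K`.
-/

open Finset
open scoped Classical

noncomputable def csupp {N : ℕ} (c : Fin N → ZMod 2) : Finset (Fin N) :=
  Finset.univ.filter (fun t => c t ≠ 0)

/-- The MAP EXIT function of coordinate `i` for transmission of a uniform codeword of
the linear code `C` over BEC(p): `h_i(p) = H(X_i | Y_{∼i}) = μ_p(Ω_i)`, the
probability that the erasure pattern on `[N]\{i}` covers (the rest of) the support of
some codeword through `i`. -/
noncomputable def hEXIT (N : ℕ) (C : Submodule (ZMod 2) (Fin N → ZMod 2))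
    (i : Fin N) (p : ℝ) : ℝ :=
  ∑ A ∈ Finset.univ.filter
      (fun A : Finset (Fin N) =>
        i ∉ A ∧ ∃ c ∈ C, c i ≠ 0 ∧ csupp c ⊆ insert i A),
    p ^ A.card * (1 - p) ^ (N - 1 - A.card)

open Module

section Shortening

variable {F ι : Type*} [Field F]

def subcodeOn (C : Submodule F (ι → F)) (E : Finset ι) : Submodule F (ι → F) :=
  C ⊓ Submodule.pi (↑E : Set ι)ᶜ fun _ => (⊥ : Submodule F F)

lemma mem_subcodeOn {C : Submodule F (ι → F)} {E : Finset ι} {c : ι → F} :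
    c ∈ subcodeOn C E ↔ c ∈ C ∧ ∀ t ∉ E, c t = 0 := by
  simp only [subcodeOn, Submodule.mem_inf, Submodule.mem_pi, Set.mem_compl_iff, mem_coe,
    Submodule.mem_bot]

lemma subcodeOn_empty (C : Submodule F (ι → F)) : subcodeOn C ∅ = ⊥ := by
  ext c
  simp only [mem_subcodeOn, notMem_empty, not_false_eq_true, forall_const, Submodule.mem_bot]
  exact ⟨fun h => funext h.2, fun h => h ▸ ⟨C.zero_mem, fun _ => rfl⟩⟩

lemma subcodeOn_univ [Fintype ι] (C : Submodule F (ι → F)) : subcodeOn C univ = C := by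
  ext c
  simp [mem_subcodeOn]

lemma subcodeOn_mono (C : Submodule F (ι → F)) {A B : Finset ι} (h : A ⊆ B) :
    subcodeOn C A ≤ subcodeOn C B :=
  fun _ hc =>
    mem_subcodeOn.2 ⟨(mem_subcodeOn.1 hc).1, fun t ht => (mem_subcodeOn.1 hc).2 t (ht <| h ·)⟩

lemma finrank_subcodeOn_insert [Finite ι] [DecidableEq ι] (C : Submodule F (ι → F))
    {i : ι} {A : Finset ι} (hi : i ∉ A) :
    finrank F (subcodeOn C (insert i A)) =
      finrank F (subcodeOn C A) + if ∃ c ∈ subcodeOn C (insert i A), c i ≠ 0 then 1 else 0 := by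
  set D := subcodeOn C (insert i A)
  let φ : Dual F D := (LinearMap.proj i).comp D.subtype
  have hker : finrank F (LinearMap.ker φ) = finrank F (subcodeOn C A) := by
    have hle : subcodeOn C A ≤ D := subcodeOn_mono C (Finset.subset_insert i A)
    refine (LinearEquiv.ofEq _ _ ?_ ≪≫ₗ Submodule.comapSubtypeEquivOfLe hle).finrank_eq
    ext ⟨c, hc⟩
    simp only [LinearMap.mem_ker, Submodule.mem_comap, Submodule.coe_subtype, mem_subcodeOn]
    obtain ⟨hcC, hc⟩ := mem_subcodeOn.1 hc
    refine ⟨fun hci => ⟨hcC, fun t ht => ?_⟩, fun h => h.2 i hi⟩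
    by_cases hti : t = i
    · exact hti ▸ hci
    · exact hc t (by simp [hti, ht])
  split_ifs with h
  · obtain ⟨c, hcD, hci⟩ := h
    have hφ : φ ≠ 0 := fun h0 => hci (congrArg (· ⟨c, hcD⟩) h0)
    rw [← hker, ← Dual.finrank_ker_add_one_of_ne_zero hφ]
  · push Not at h
    have hφ : φ = 0 := LinearMap.ext fun c => h c c.2
    rw [← hker, hφ, LinearMap.ker_zero, finrank_top, add_zero]

end Shortening

lemma hasDerivAt_pow_mul_one_sub_pow (k m : ℕ) (p : ℝ) :
    HasDerivAt (fun p : ℝ => p ^ k * (1 - p) ^ m)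
      (k * p ^ (k - 1) * (1 - p) ^ m - m * p ^ k * (1 - p) ^ (m - 1)) p := by
  refine ((hasDerivAt_pow k p).fun_mul (((hasDerivAt_id' p).const_sub 1).fun_pow m)).congr_deriv ?_
  ring

section RandomSubset

variable {ι : Type*} [Fintype ι] (g : Finset ι → ℝ)

def randomSubsetMean (p : ℝ) : ℝ :=
  ∑ E, g E * (p ^ #E * (1 - p) ^ (Fintype.card ι - #E))

lemma randomSubsetMean_zero : randomSubsetMean g 0 = g ∅ := by
  rw [randomSubsetMean, sum_eq_single ∅ (fun E _ hE => by simp [hE]) (by simp)]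
  simp

lemma randomSubsetMean_one : randomSubsetMean g 1 = g univ := by
  rw [randomSubsetMean, sum_eq_single univ (fun E _ hE => ?_) (by simp)]
  · simp
  · have : 0 < Fintype.card ι - #E := Nat.sub_pos_of_lt ((card_lt_iff_ne_univ E).2 hE)
    simp [this.ne']

variable [DecidableEq ι]

lemma sum_filter_notMem_insert {M : Type*} [AddCommMonoid M] (i : ι) (f : Finset ι → ℕ → M) :
    ∑ A with i ∉ A, f (insert i A) #A = ∑ E with i ∈ E, f E (#E - 1) :=
  sum_nbij' (insert i) (·.erase i) (by simp) (by simp)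
    (fun _ hA => erase_insert (mem_filter.1 hA).2) (fun _ hE => insert_erase (mem_filter.1 hE).2)
    fun A hA => by rw [card_insert_of_notMem (mem_filter.1 hA).2, Nat.add_sub_cancel]

lemma sum_sum_filter_mem {M : Type*} [AddCommMonoid M] (f : Finset ι → M) :
    ∑ i, ∑ E with i ∈ E, f E = ∑ E, #E • f E := by
  rw [sum_comm' (t' := univ) (s' := id) (by simp)]
  simp

lemma sum_sum_filter_notMem {M : Type*} [AddCommMonoid M] (f : Finset ι → M) :
    ∑ i, ∑ E with i ∉ E, f E = ∑ E, (Fintype.card ι - #E) • f E := by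
  rw [sum_comm' (t' := univ) (s' := (·ᶜ)) (by simp)]
  simp [card_compl]

def influence (i : ι) (p : ℝ) : ℝ :=
  ∑ A with i ∉ A, (g (insert i A) - g A) * (p ^ #A * (1 - p) ^ (Fintype.card ι - 1 - #A))

lemma sum_influence (p : ℝ) :
    ∑ i, influence g i p = ∑ E, g E *
      (#E * p ^ (#E - 1) * (1 - p) ^ (Fintype.card ι - #E)
        - (Fintype.card ι - #E : ℕ) * p ^ #E * (1 - p) ^ (Fintype.card ι - #E - 1)) := by
  simp only [influence, sub_mul, sum_sub_distrib]
  rw [sum_congr rfl fun i _ => sum_filter_notMem_insert i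
    (fun E k => g E * (p ^ k * (1 - p) ^ (Fintype.card ι - 1 - k))),
    sum_sum_filter_mem, sum_sum_filter_notMem, ← sum_sub_distrib]
  refine sum_congr rfl fun E _ => ?_
  have hE : #E ≤ Fintype.card ι := card_le_univ E
  rw [nsmul_eq_mul, nsmul_eq_mul, show Fintype.card ι - 1 - #E = Fintype.card ι - #E - 1 by omega]
  rcases Nat.eq_zero_or_pos #E with h | h
  · simp only [h, Nat.cast_zero, zero_mul, zero_sub, Nat.sub_zero]
    ring
  · rw [show Fintype.card ι - 1 - (#E - 1) = Fintype.card ι - #E by omega]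
    ring

/-- The Margulis–Russo formula. -/
lemma hasDerivAt_randomSubsetMean (p : ℝ) :
    HasDerivAt (randomSubsetMean g) (∑ i, influence g i p) p := by
  rw [sum_influence]
  exact HasDerivAt.fun_sum fun E _ => (hasDerivAt_pow_mul_one_sub_pow _ _ p).const_mul (g E)

lemma integral_sum_influence :
    ∫ p in (0 : ℝ)..1, ∑ i, influence g i p = g univ - g ∅ := by
  rw [intervalIntegral.integral_eq_sub_of_hasDerivAt (fun p _ => hasDerivAt_randomSubsetMean g p)
    (Continuous.intervalIntegrable (by unfold influence; fun_prop) _ _),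
    randomSubsetMean_one, randomSubsetMean_zero]

end RandomSubset

lemma csupp_subset_iff {N : ℕ} {c : Fin N → ZMod 2} {E : Finset (Fin N)} :
    csupp c ⊆ E ↔ ∀ t ∉ E, c t = 0 := by
  simp only [csupp, subset_iff, mem_filter, mem_univ, true_and]
  exact forall_congr' fun t => not_imp_comm

lemma hEXIT_eq_influence (N : ℕ) (C : Submodule (ZMod 2) (Fin N → ZMod 2)) (i : Fin N)
    (p : ℝ) :
    hEXIT N C i p = influence (fun E => (finrank (ZMod 2) (subcodeOn C E) : ℝ)) i p := by
  rw [hEXIT, influence, ← filter_filter, sum_filter, Fintype.card_fin]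
  refine sum_congr rfl fun A hA => ?_
  rw [finrank_subcodeOn_insert C (mem_filter.1 hA).2]
  have hpivot : (∃ c ∈ C, c i ≠ 0 ∧ csupp c ⊆ insert i A) ↔
      ∃ c ∈ subcodeOn C (insert i A), c i ≠ 0 := by
    simp only [mem_subcodeOn, csupp_subset_iff, and_assoc]
    exact exists_congr fun c => and_congr_right' and_comm
  simp only [hpivot]
  split_ifs <;> push_cast <;> ring

theorem exit_area_theorem_general (N : ℕ)
    (C : Submodule (ZMod 2) (Fin N → ZMod 2))
    (K : ℕ) (hK : K = Module.finrank (ZMod 2) C)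
    (heq : ∀ i j : Fin N, ∀ p : ℝ, hEXIT N C i p = hEXIT N C j p) :
    (∀ i : Fin N, ∀ p : ℝ,
      hEXIT N C i p = (1 / N) * ∑ j : Fin N, hEXIT N C j p) ∧
    (∫ p in (0:ℝ)..1, (1 / N) * ∑ j : Fin N, hEXIT N C j p) = (K : ℝ) / N := by
  refine ⟨fun i p => ?_, ?_⟩
  · have hN : (N : ℝ) ≠ 0 := Nat.cast_ne_zero.2 i.pos.ne'
    rw [sum_congr rfl fun j _ => heq j i p, sum_const, card_univ, Fintype.card_fin, nsmul_eq_mul]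
    field_simp
  · simp only [intervalIntegral.integral_const_mul, hEXIT_eq_influence, integral_sum_influence]
    rw [subcodeOn_univ, subcodeOn_empty, finrank_bot, hK, Nat.cast_zero, sub_zero, one_div,
      inv_mul_eq_div]

/-- If all coordinate EXIT functions of a linear code are equal (e.g. for a
1-transitive code), then each equals the average EXIT function, and the area theorem
holds: `∫₀¹ h(p) dp = K/N`, the rate of the code. -/
theorem exit_area_theorem (N : ℕ) (hN : 0 < N)
    (C : Submodule (ZMod 2) (Fin N → ZMod 2))
    (K : ℕ) (hK : K = Module.finrank (ZMod 2) C)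
    (heq : ∀ i j : Fin N, ∀ p : ℝ, hEXIT N C i p = hEXIT N C j p) :
    (∀ i : Fin N, ∀ p : ℝ,
      hEXIT N C i p = (1 / N) * ∑ j : Fin N, hEXIT N C j p) ∧
    (∫ p in (0:ℝ)..1, (1 / N) * ∑ j : Fin N, hEXIT N C j p) = (K : ℝ) / N :=
  exit_area_theorem_general N C K hK heq
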